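/- Let A ∈ ℝ^{m×n}, p ∈ [2, ∞), ε > 0, δ ≥ 0, and suppose the additive noise mechanism M(x) = Ax + z is (ε,δ)-differentially private, where the noise z has finite second moments and satisfies ‖E[z]‖₂ ≤ (γ_{(p)}(A)/ε) · n^{(p−2)/(2p)}. Suppose further that δ' := 2δ/(1 − e^{−ε}) ≤ min{ 1/16, ε·κ(A)·n^{(p−2)/(2p)}/(12 γ_{(p)}(A)), 1 − e^{−ε} }. Fix θ ∈ ℝ^m and let M_θ(x) := θᵀAx + θᵀz. Then for every x ∈ ℝ^n there exists x' with ‖x − x'‖₁ ≤ 1 such that, writing P and Q for the distributions on ℝ of M_θ(x) and M_θ(x') respectively, S := S_{P,Q,2ε}, and P̂ for the measure P̂(T) := (Q(S)/P(S))·P(T ∩ S) + Q(T \ S), one has |E_{X∼P̂}[X] − E_{X∼Q}[X]| ≥ (1/2 − 2δ') · w_{AB₁^n}(θ)/2 − (17/8) · √(δ' · Var[θᵀM(x)]). -/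

import Mathlib

open MeasureTheory Matrix
open scoped ENNReal

noncomputable section

namespace DPPaper

variable {ι κ : Type*}

/-- Two inputs `x, x' : ι → ℝ` are neighboring if `‖x - x'‖₁ ≤ 1`. -/
def Neighboring [Fintype ι] (x x' : ι → ℝ) : Prop :=
  ∑ i, |x i - x' i| ≤ 1

/-- A mechanism `M` (a map from inputs to probability measures on an output space `Ω`)
is `(ε,δ)`-differentially private if for all neighboring inputs and all measurable sets `S`,
`M x S ≤ e^ε · M x' S + δ`. -/
def IsDP [Fintype ι] {Ω : Type*} [MeasurableSpace Ω]
    (M : (ι → ℝ) → Measure Ω) (ε δ : ℝ) : Prop :=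
  ∀ x x' : ι → ℝ, Neighboring x x' → ∀ S : Set Ω, MeasurableSet S →
    M x S ≤ ENNReal.ofReal (Real.exp ε) * M x' S + ENNReal.ofReal δ

/-- The `ℓ_p^p`-error of a mechanism `M` on the query matrix `A`:
`sup_x (E_{Y ~ M x} [ ‖Y - A x‖_p^p ])^{1/p}`, valued in `ℝ≥0∞`. -/
def errLp [Fintype ι] [Fintype κ] (M : (ι → ℝ) → Measure (κ → ℝ))
    (A : Matrix κ ι ℝ) (p : ℝ) : ℝ≥0∞ :=
  ⨆ x : ι → ℝ,
    (∫⁻ y, ENNReal.ofReal (∑ i, |y i - A.mulVec x i| ^ p) ∂(M x)) ^ (1 / p)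

/-- The `q`-trace of a square matrix: `(∑ i, U i i ^ q)^{1/q}`. -/
def trq [Fintype κ] (q : ℝ) (U : Matrix κ κ ℝ) : ℝ :=
  (∑ i, (U i i) ^ q) ^ (1 / q)

/-- The `1 → 2` operator norm of a matrix: the largest `ℓ₂`-norm of a column. -/
def norm12 [Fintype ι] [Fintype κ] (R : Matrix κ ι ℝ) : ℝ :=
  ⨆ j : ι, Real.sqrt (∑ i, (R i j) ^ 2)

/-- The factorization norm `γ_{(p)}(A)`. -/
def gammaP [Fintype ι] [Fintype κ] (p : ℝ) (A : Matrix κ ι ℝ) : ℝ :=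
  sInf { c : ℝ | ∃ (k : ℕ) (L : Matrix κ (Fin k) ℝ) (R : Matrix (Fin k) ι ℝ),
    L * R = A ∧ c = Real.sqrt (trq (p / 2) (L * Lᵀ)) * norm12 R }

/-- The Schatten-1 norm of a matrix: the trace of the PSD square root of `Aᵀ * A`,
i.e. the sum of the singular values of `A`. -/
def psdSqrt {n : Type*} [Fintype n] [DecidableEq n] {M : Matrix n n ℝ} (hM : M.PosSemidef) :
    Matrix n n ℝ :=
  hM.1.eigenvectorUnitary.1 * diagonal ((↑) ∘ Real.sqrt ∘ hM.1.eigenvalues) *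
    (star hM.1.eigenvectorUnitary : Matrix n n ℝ)

def schatten1 [Fintype ι] [Fintype κ] [DecidableEq ι] (A : Matrix κ ι ℝ) : ℝ :=
  (psdSqrt (Matrix.posSemidef_conjTranspose_mul_self A)).trace

/-- The sensitivity polytope `A B₁^n = {A x : ‖x‖₁ ≤ 1}`. -/
def sensPolytope [Fintype ι] (A : Matrix κ ι ℝ) : Set (κ → ℝ) :=
  {v | ∃ x : ι → ℝ, (∑ i, |x i|) ≤ 1 ∧ v = A.mulVec x}

/-- The width of a set `K` in direction `θ`. -/
def width [Fintype κ] (K : Set (κ → ℝ)) (θ : κ → ℝ) : ℝ :=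
  sSup ((fun v => ∑ i, θ i * v i) '' K) - sInf ((fun v => ∑ i, θ i * v i) '' K)

/-- `κ(A)`: the minimal width of the sensitivity polytope over all unit directions. -/
def kappa [Fintype ι] [Fintype κ] (A : Matrix κ ι ℝ) : ℝ :=
  sInf { c : ℝ | ∃ θ : κ → ℝ, (∑ i, (θ i) ^ 2) = 1 ∧ c = width (sensPolytope A) θ }

/-- The prefix-sum (continual counting) matrix: lower-triangular all ones. -/
def Aprefix (n : ℕ) : Matrix (Fin n) (Fin n) ℝ :=
  fun i j => if j ≤ i then 1 else 0

/-- The covariance matrix of a measure on `κ → ℝ`. -/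
def covMatrix [Fintype κ] (μ : Measure (κ → ℝ)) : Matrix κ κ ℝ :=
  fun i j => ∫ y, (y i - ∫ y', y' i ∂μ) * (y j - ∫ y', y' j ∂μ) ∂μ

/-- The parity query matrix `Q_{d,w}`: rows indexed by `w`-element subsets `P` of `{1,…,d}`,
columns indexed by points of `{-1,1}^d` (encoded as `Fin d → Bool`), entry `∏_{i ∈ P} x_i`. -/
def parityMatrix (d w : ℕ) : Matrix {P : Finset (Fin d) // P.card = w} (Fin d → Bool) ℝ :=
  fun P b => ∏ i ∈ P.1, (if b i then (1 : ℝ) else -1)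

/-- The Hadamard matrices: `H_0 = [1]`, `H_{d+1} = [[H_d, H_d], [H_d, -H_d]]`. -/
def Hadamard : (d : ℕ) → Matrix (Fin (2 ^ d)) (Fin (2 ^ d)) ℝ
  | 0 => fun _ _ => 1
  | (d + 1) =>
    Matrix.reindex
      (finSumFinEquiv.trans (finCongr (by rw [pow_succ, mul_two])))
      (finSumFinEquiv.trans (finCongr (by rw [pow_succ, mul_two])))
      (Matrix.fromBlocks (Hadamard d) (Hadamard d) (Hadamard d) (-(Hadamard d)))

end DPPaper
/-!
Moving one unit of `ℓ₁`-mass onto a coordinate `j` maximising `|(θᵀA)ⱼ|` gives a neighbour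
`x'` for which `P` is the translate of `Q` by some `Δ` with `|Δ| ≥ w_{AB₁}(θ)/2`. By
post-processing `θᵀM` is still `(ε,δ)`-private, so each of the tails `{dP/dQ > e^{2ε}}` and
`{dP/dQ < e^{-2ε}}` carries at most `δ' = 2δ/(1-e^{-ε})` of the mass of `P` and of `Q`: on such
a tail the density ratio beats the privacy bound by a factor `e^{ε}`, so only the additive slack
`δ` is left. Hence `P(S), Q(S) ≥ 1 - δ'`, the factor `r = Q(S)/P(S)` is close to `1`, and
`E_{P̂} - E_Q = r (Δ - e₁) + e₂`, where `e₁, e₂` are the contributions of `Sᶜ` to the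
`Q`-centred first moments of `P` and `Q`; Cauchy–Schwarz bounds them by `√(δ' (Var + Δ²))` and
`√(δ' Var)`.
-/

namespace DPPaper

open ProbabilityTheory Real

section Moments

variable {α : Type*} [MeasurableSpace α]

lemma sq_setIntegral_le_measureReal_mul_integral_sq {μ : Measure α} [IsFiniteMeasure μ]
    {g : α → ℝ} (hg : MemLp g 2 μ) (U : Set α) :
    (∫ x in U, g x ∂μ) ^ 2 ≤ μ.real U * ∫ x, g x ^ 2 ∂μ := by
  have hg1 : Integrable g (μ.restrict U) := (hg.integrable one_le_two).restrict
  have hg2 : Integrable (fun x => g x ^ 2) μ := hg.integrable_sq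
  -- `t ↦ ∫_U (g - t)²` is a nonnegative quadratic, so its discriminant is nonpositive
  have hquad : ∀ t : ℝ, 0 ≤ μ.real U * (t * t) + (-2 * ∫ x in U, g x ∂μ) * t +
      ∫ x in U, g x ^ 2 ∂μ := by
    intro t
    have h : 0 ≤ ∫ x in U, (g x - t) ^ 2 ∂μ := integral_nonneg fun x => sq_nonneg _
    have hexp : (fun x => (g x - t) ^ 2) = fun x => (g x ^ 2 - 2 * t * g x) + t ^ 2 := by
      funext x; ring
    have hI : Integrable (fun x => g x ^ 2 - 2 * t * g x) (μ.restrict U) :=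
      hg2.restrict.sub (hg1.const_mul _)
    rw [hexp, integral_add hI (integrable_const _),
      integral_sub hg2.restrict (hg1.const_mul _), integral_const_mul, integral_const,
      smul_eq_mul, measureReal_restrict_apply_univ] at h
    linarith
  have hdisc := discrim_le_zero hquad
  have hset : ∫ x in U, g x ^ 2 ∂μ ≤ ∫ x, g x ^ 2 ∂μ :=
    setIntegral_le_integral hg2 (.of_forall fun x => sq_nonneg _)
  rw [discrim] at hdisc
  nlinarith [measureReal_nonneg (μ := μ) (s := U)]

lemma integral_sub_const_sq {μ : Measure α} [IsProbabilityMeasure μ] {f : α → ℝ}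
    (hf : MemLp f 2 μ) (c : ℝ) :
    ∫ ω, (f ω - c) ^ 2 ∂μ = Var[f; μ] + (μ[f] - c) ^ 2 := by
  rw [← variance_sub_const hf.aestronglyMeasurable c,
    variance_eq_sub (X := fun ω => f ω - c) (hf.sub (memLp_const c)),
    integral_sub (hf.integrable one_le_two) (integrable_const c)]
  simp

lemma sq_setIntegral_sub_le {μ : Measure α} [IsProbabilityMeasure μ] {f : α → ℝ}
    (hf : MemLp f 2 μ) (c : ℝ) (U : Set α) :
    (∫ ω in U, (f ω - c) ∂μ) ^ 2 ≤ μ.real U * (Var[f; μ] + (μ[f] - c) ^ 2) := by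
  rw [← integral_sub_const_sq hf c]
  exact sq_setIntegral_le_measureReal_mul_integral_sq (hf.sub (memLp_const c)) U

end Moments

section Translate

variable {Ω : Type*} [MeasurableSpace Ω] {ν : Measure Ω} [IsProbabilityMeasure ν] {T : Ω → ℝ}

lemma memLp_id_map_const_add (hT : MemLp T 2 ν) (b : ℝ) :
    MemLp id 2 (ν.map fun w => b + T w) :=
  (memLp_map_measure_iff aestronglyMeasurable_id (hT.aemeasurable.const_add b)).mpr
    ((memLp_const b).add hT)

lemma integral_id_map_const_add (hT : Integrable T ν) (b : ℝ) :
    ∫ ω, ω ∂(ν.map fun w => b + T w) = b + ν[T] := by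
  rw [integral_map (hT.aemeasurable.const_add b) measurable_id'.aestronglyMeasurable,
    integral_add (integrable_const b) hT]
  simp

lemma variance_id_map_const_add (hT : AEMeasurable T ν) (b : ℝ) :
    Var[id; ν.map fun w => b + T w] = Var[T; ν] := by
  rw [variance_id_map (hT.const_add b), variance_const_add hT.aestronglyMeasurable]

end Translate

section PrivacyLoss

variable {α : Type*} [MeasurableSpace α]

lemma mul_measureReal_le_of_le_rnDeriv (P Q : Measure α) [IsFiniteMeasure P] {c : ℝ}
    (hc : 0 ≤ c) {T : Set α} (h : ∀ ω ∈ T, ENNReal.ofReal c ≤ P.rnDeriv Q ω) :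
    c * Q.real T ≤ P.real T := by
  have hle : ENNReal.ofReal c * Q T ≤ P T :=
    calc ENNReal.ofReal c * Q T = ∫⁻ _ in T, ENNReal.ofReal c ∂Q :=
          (setLIntegral_const _ _).symm
      _ ≤ ∫⁻ ω in T, P.rnDeriv Q ω ∂Q := setLIntegral_mono (Measure.measurable_rnDeriv P Q) h
      _ ≤ P T := Measure.setLIntegral_rnDeriv_le T
  simpa [measureReal_def, ENNReal.toReal_mul, hc] using
    ENNReal.toReal_mono (measure_ne_top P T) hle

lemma exists_measureReal_inter_le_of_rnDeriv_le (P Q : Measure α) [IsFiniteMeasure Q]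
    [P.HaveLebesgueDecomposition Q] :
    ∃ E, MeasurableSet E ∧ Q Eᶜ = 0 ∧ ∀ {T : Set α} {c : ℝ}, MeasurableSet T → 0 ≤ c →
      (∀ ω ∈ T, P.rnDeriv Q ω ≤ ENNReal.ofReal c) → P.real (T ∩ E) ≤ c * Q.real T := by
  -- `E` carries `Q` but none of the singular part of `P`
  have hsing := Measure.mutuallySingular_singularPart P Q
  refine ⟨hsing.nullSet, hsing.measurableSet_nullSet, hsing.measure_compl_nullSet,
    fun {T c} hT hc hle => ?_⟩
  set E := hsing.nullSet
  have hle' : P (T ∩ E) ≤ ENNReal.ofReal c * Q T :=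
    calc P (T ∩ E)
        = P.singularPart Q (T ∩ E) + Q.withDensity (P.rnDeriv Q) (T ∩ E) := by
          conv_lhs => rw [← Measure.singularPart_add_rnDeriv P Q]
          rfl
      _ = ∫⁻ ω in T ∩ E, P.rnDeriv Q ω ∂Q := by
          rw [measure_mono_null Set.inter_subset_right hsing.measure_nullSet, zero_add,
            withDensity_apply _ (hT.inter hsing.measurableSet_nullSet)]
      _ ≤ ∫⁻ _ in T ∩ E, ENNReal.ofReal c ∂Q :=
          setLIntegral_mono measurable_const fun ω hω => hle ω hω.1
      _ = ENNReal.ofReal c * Q (T ∩ E) := setLIntegral_const _ _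
      _ ≤ ENNReal.ofReal c * Q T := by gcongr; exact Set.inter_subset_left
  simpa [measureReal_def, ENNReal.toReal_mul, hc] using
    ENNReal.toReal_mono (ENNReal.mul_ne_top ENNReal.ofReal_ne_top (measure_ne_top Q T)) hle'

lemma mul_one_sub_exp_neg_le {ε δ x y : ℝ} (hx : x ≤ exp ε * y + δ)
    (hy : y ≤ exp (-(2 * ε)) * x) : x * (1 - exp (-ε)) ≤ δ := by
  have : exp ε * y ≤ exp (-ε) * x :=
    calc exp ε * y ≤ exp ε * (exp (-(2 * ε)) * x) := by gcongr
      _ = exp (-ε) * x := by rw [← mul_assoc, ← exp_add]; ring_nf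
  linarith

/-- The paper's `S_{P,Q,ε}`. -/
def privacyLossSet (P Q : Measure α) (ε : ℝ) : Set α :=
  {ω | ENNReal.ofReal (exp (-ε)) ≤ P.rnDeriv Q ω ∧ P.rnDeriv Q ω ≤ ENNReal.ofReal (exp ε)}

lemma measurableSet_privacyLossSet (P Q : Measure α) (ε : ℝ) :
    MeasurableSet (privacyLossSet P Q ε) :=
  Measure.measurable_rnDeriv P Q measurableSet_Icc

variable {P Q : Measure α} {ε δ : ℝ}

lemma upper_tail_measureReal_le [IsFiniteMeasure P]
    (hPQ : ∀ U, MeasurableSet U → P.real U ≤ exp ε * Q.real U + δ) :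
    P.real {ω | ENNReal.ofReal (exp (2 * ε)) < P.rnDeriv Q ω} * (1 - exp (-ε)) ≤ δ ∧
      Q.real {ω | ENNReal.ofReal (exp (2 * ε)) < P.rnDeriv Q ω} ≤
        exp (-(2 * ε)) * P.real {ω | ENNReal.ofReal (exp (2 * ε)) < P.rnDeriv Q ω} := by
  set T := {ω | ENNReal.ofReal (exp (2 * ε)) < P.rnDeriv Q ω}
  have hT : MeasurableSet T :=
    measurableSet_lt measurable_const (Measure.measurable_rnDeriv P Q)
  have hQT : Q.real T ≤ exp (-(2 * ε)) * P.real T :=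
    calc Q.real T = exp (-(2 * ε)) * (exp (2 * ε) * Q.real T) := by
          rw [← mul_assoc, ← exp_add]; simp
      _ ≤ exp (-(2 * ε)) * P.real T := by
          gcongr
          exact mul_measureReal_le_of_le_rnDeriv P Q (exp_pos _).le fun ω hω => hω.le
  exact ⟨mul_one_sub_exp_neg_le (hPQ T hT) hQT, hQT⟩

lemma lower_tail_measureReal_le [IsFiniteMeasure P] [IsFiniteMeasure Q]
    (hPQ : ∀ U, MeasurableSet U → P.real U ≤ exp ε * Q.real U + δ)
    (hQP : ∀ U, MeasurableSet U → Q.real U ≤ exp ε * P.real U + δ) :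
    Q.real {ω | P.rnDeriv Q ω < ENNReal.ofReal (exp (-(2 * ε)))} * (1 - exp (-ε)) ≤ δ ∧
      P.real {ω | P.rnDeriv Q ω < ENNReal.ofReal (exp (-(2 * ε)))} ≤
        exp (-(2 * ε)) * Q.real {ω | P.rnDeriv Q ω < ENNReal.ofReal (exp (-(2 * ε)))} + δ := by
  obtain ⟨E, hE, hQE, hle⟩ := exists_measureReal_inter_le_of_rnDeriv_le P Q
  set T := {ω | P.rnDeriv Q ω < ENNReal.ofReal (exp (-(2 * ε)))}
  have hT : MeasurableSet T :=
    measurableSet_lt (Measure.measurable_rnDeriv P Q) measurable_const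
  have hPTE : P.real (T ∩ E) ≤ exp (-(2 * ε)) * Q.real T :=
    hle hT (exp_pos _).le fun ω hω => hω.le
  have hQTE : Q.real (T ∩ E) = Q.real T := by
    simp only [measureReal_def, measure_inter_conull hQE]
  have hPE : P.real Eᶜ ≤ δ := by
    simpa [measureReal_def, hQE] using hPQ Eᶜ hE.compl
  have hPT : P.real T ≤ P.real (T ∩ E) + P.real Eᶜ :=
    (measureReal_mono fun ω hω => by by_cases hωE : ω ∈ E <;> simp [*]).trans
      (measureReal_union_le _ _)
  refine ⟨mul_one_sub_exp_neg_le (hQTE ▸ hQP _ (hT.inter hE)) hPTE, by linarith⟩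

theorem measureReal_compl_privacyLossSet_le [IsFiniteMeasure P] [IsFiniteMeasure Q]
    (hε : 0 < ε)
    (hPQ : ∀ U, MeasurableSet U → P.real U ≤ exp ε * Q.real U + δ)
    (hQP : ∀ U, MeasurableSet U → Q.real U ≤ exp ε * P.real U + δ) :
    P.real (privacyLossSet P Q (2 * ε))ᶜ ≤ 2 * δ / (1 - exp (-ε)) ∧
      Q.real (privacyLossSet P Q (2 * ε))ᶜ ≤ 2 * δ / (1 - exp (-ε)) := by
  obtain ⟨hPup, hQup⟩ := upper_tail_measureReal_le hPQ
  obtain ⟨hQlo, hPlo⟩ := lower_tail_measureReal_le hPQ hQP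
  set Tlo := {ω | P.rnDeriv Q ω < ENNReal.ofReal (exp (-(2 * ε)))}
  set Tup := {ω | ENNReal.ofReal (exp (2 * ε)) < P.rnDeriv Q ω}
  have hsub : (privacyLossSet P Q (2 * ε))ᶜ ⊆ Tlo ∪ Tup := fun ω hω => by
    simp only [privacyLossSet, Set.mem_compl_iff, Set.mem_ofPred_eq, not_and_or, not_le] at hω
    exact hω
  have hδ : 0 ≤ δ := by simpa using hPQ ∅ MeasurableSet.empty
  set B := exp (-ε)
  have hB1 : B < 1 := exp_lt_one_iff.mpr (by linarith)
  have hB2 : exp (-(2 * ε)) = B ^ 2 := by rw [← exp_nat_mul]; ring_nf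
  have hB2B : B ^ 2 * δ ≤ B * δ := by gcongr; nlinarith [exp_pos (-ε)]
  rw [hB2] at hQup hPlo
  rw [le_div_iff₀ (by linarith), le_div_iff₀ (by linarith)]
  constructor
  · calc _ ≤ (P.real Tlo + P.real Tup) * (1 - B) := by
          gcongr; exact (measureReal_mono hsub).trans (measureReal_union_le _ _)
      _ ≤ 2 * δ := by nlinarith [mul_le_mul_of_nonneg_left hQlo (sq_nonneg B)]
  · calc _ ≤ (Q.real Tlo + Q.real Tup) * (1 - B) := by
          gcongr; exact (measureReal_mono hsub).trans (measureReal_union_le _ _)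
      _ ≤ 2 * δ := by nlinarith [mul_le_mul_of_nonneg_left hPup (sq_nonneg B)]

end PrivacyLoss

section HatMeasure

variable {α : Type*} [MeasurableSpace α]

/-- The paper's `P̂`. -/
def hatMeasure (P Q : Measure α) (S : Set α) : Measure α :=
  (Q S / P S) • P.restrict S + Q.restrict Sᶜ

lemma integral_hatMeasure_sub_integral {P Q : Measure α} [IsFiniteMeasure P]
    [IsFiniteMeasure Q] {S : Set α} (hS : MeasurableSet S) (hPS : P S ≠ 0) {f : α → ℝ}
    (hfP : Integrable f P) (hfQ : Integrable f Q) (c : ℝ) :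
    ∫ ω, f ω ∂hatMeasure P Q S - ∫ ω, f ω ∂Q =
      (Q S / P S).toReal * ∫ ω in S, (f ω - c) ∂P - ∫ ω in S, (f ω - c) ∂Q := by
  have hr : Q S / P S ≠ ⊤ := ENNReal.div_ne_top (measure_ne_top _ _) hPS
  have hratio : (Q S / P S).toReal * P.real S = Q.real S := by
    rw [measureReal_def, measureReal_def, ← ENNReal.toReal_mul,
      ENNReal.div_mul_cancel hPS (measure_ne_top _ _)]
  rw [hatMeasure, integral_add_measure (hfP.restrict.smul_measure hr) hfQ.restrict,
    integral_smul_measure, ← integral_add_compl hS hfQ,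
    integral_sub hfP.restrict (integrable_const c),
    integral_sub hfQ.restrict (integrable_const c),
    setIntegral_const, setIntegral_const]
  simp only [smul_eq_mul]
  linear_combination c * hratio

lemma integral_hatMeasure_sub_eq {P Q : Measure α} [IsProbabilityMeasure P]
    [IsProbabilityMeasure Q] {S : Set α} (hS : MeasurableSet S) (hPS : P S ≠ 0) {f : α → ℝ}
    (hfP : Integrable f P) (hfQ : Integrable f Q) :
    ∫ ω, f ω ∂hatMeasure P Q S - Q[f] =
      (Q S / P S).toReal * (P[f] - Q[f] - ∫ ω in Sᶜ, (f ω - Q[f]) ∂P) +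
        ∫ ω in Sᶜ, (f ω - Q[f]) ∂Q := by
  have hP := integral_add_compl (f := fun ω => f ω - Q[f]) hS (hfP.sub (integrable_const _))
  have hQ := integral_add_compl (f := fun ω => f ω - Q[f]) hS (hfQ.sub (integrable_const _))
  rw [integral_sub hfP (integrable_const _), integral_const] at hP
  rw [integral_sub hfQ (integrable_const _), integral_const] at hQ
  simp only [probReal_univ, one_smul, sub_self] at hP hQ
  rw [integral_hatMeasure_sub_integral hS hPS hfP hfQ Q[f]]
  linear_combination (Q S / P S).toReal * hP - hQ

lemma toReal_div_mem_Icc_of_measureReal_compl_le {P Q : Measure α} [IsProbabilityMeasure P]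
    [IsProbabilityMeasure Q] {S : Set α} (hS : MeasurableSet S) {d : ℝ} (hd : d < 1)
    (hPS : P.real Sᶜ ≤ d) (hQS : Q.real Sᶜ ≤ d) :
    (Q S / P S).toReal ∈ Set.Icc (1 - d) (1 / (1 - d)) := by
  rw [probReal_compl_eq_one_sub hS] at hPS hQS
  have hP1 : P.real S ≤ 1 := measureReal_le_one
  have hQ1 : Q.real S ≤ 1 := measureReal_le_one
  rw [ENNReal.toReal_div, ← measureReal_def, ← measureReal_def, Set.mem_Icc,
    le_div_iff₀ (by linarith)]
  exact ⟨by nlinarith, div_le_div₀ zero_le_one hQ1 (by linarith) (by linarith)⟩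

theorem le_abs_integral_hatMeasure_sub {P Q : Measure α} [IsProbabilityMeasure P]
    [IsProbabilityMeasure Q] {S : Set α} (hS : MeasurableSet S) {f : α → ℝ}
    (hfP : MemLp f 2 P) (hfQ : MemLp f 2 Q) (hvar : Var[f; P] = Var[f; Q]) {d : ℝ}
    (hd : d ≤ 1 / 16) (hPS : P.real Sᶜ ≤ d) (hQS : Q.real Sᶜ ≤ d) :
    (1 / 2 - 2 * d) * |P[f] - Q[f]| - 17 / 8 * √(d * Var[f; Q]) ≤
      |∫ ω, f ω ∂hatMeasure P Q S - Q[f]| := by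
  obtain ⟨hr_lb, hr_ub⟩ :=
    toReal_div_mem_Icc_of_measureReal_compl_le hS (by linarith) hPS hQS
  have hd0 : 0 ≤ d := measureReal_nonneg.trans hPS
  have hPS0 : P S ≠ 0 := fun h => by
    simp [probReal_compl_eq_one_sub hS, measureReal_def, h] at hPS
    linarith
  have hr16 : (Q S / P S).toReal ≤ 16 / 15 :=
    hr_ub.trans (by rw [div_le_div_iff₀ (by linarith) (by norm_num)]; linarith)
  set r := (Q S / P S).toReal
  set Δ := P[f] - Q[f]
  set t := √(d * Var[f; Q])
  set e₁ := ∫ ω in Sᶜ, (f ω - Q[f]) ∂P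
  set e₂ := ∫ ω in Sᶜ, (f ω - Q[f]) ∂Q
  have hgap : ∫ ω, f ω ∂hatMeasure P Q S - Q[f] = r * (Δ - e₁) + e₂ :=
    integral_hatMeasure_sub_eq hS hPS0 (hfP.integrable one_le_two) (hfQ.integrable one_le_two)
  have he₁ : |e₁| ≤ t + |Δ| / 4 := by
    refine abs_le_of_sq_le_sq ?_ (by positivity)
    have ht : t ^ 2 = d * Var[f; Q] := sq_sqrt (mul_nonneg hd0 (variance_nonneg _ _))
    calc e₁ ^ 2 ≤ P.real Sᶜ * (Var[f; P] + Δ ^ 2) := sq_setIntegral_sub_le hfP _ _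
      _ ≤ d * (Var[f; Q] + Δ ^ 2) := by
          rw [hvar]; gcongr; exact add_nonneg (variance_nonneg _ _) (sq_nonneg _)
      _ ≤ (t + |Δ| / 4) ^ 2 := by nlinarith [sq_abs Δ, abs_nonneg Δ, sqrt_nonneg (d * Var[f; Q])]
  have he₂ : |e₂| ≤ t := by
    refine abs_le_sqrt ?_
    calc e₂ ^ 2 ≤ Q.real Sᶜ * (Var[f; Q] + (Q[f] - Q[f]) ^ 2) :=
          sq_setIntegral_sub_le hfQ _ _
      _ ≤ d * Var[f; Q] := by
          rw [sub_self, zero_pow two_ne_zero, add_zero]; gcongr; exact variance_nonneg _ _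
  have habs : r * (|Δ| - |e₁|) - |e₂| ≤ |r * (Δ - e₁) + e₂| := by
    have h₁ := abs_sub_abs_le_abs_sub Δ e₁
    have h₂ := abs_sub_abs_le_abs_sub (r * (Δ - e₁)) (-e₂)
    rw [abs_neg, sub_neg_eq_add, abs_mul, abs_of_nonneg (by linarith : 0 ≤ r)] at h₂
    nlinarith
  have h₁ : (1 - d) * |Δ| ≤ r * |Δ| := mul_le_mul_of_nonneg_right hr_lb (abs_nonneg Δ)
  have h₂ : r * |e₁| ≤ 16 / 15 * (t + |Δ| / 4) :=
    mul_le_mul hr16 he₁ (abs_nonneg _) (by norm_num)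
  -- with `r ≤ 16/15` the gap is at least `(1 - d - 4/15) |Δ| - (31/15) t`
  rw [hgap]
  nlinarith [sqrt_nonneg (d * Var[f; Q]), abs_nonneg Δ]

theorem le_abs_integral_hatMeasure_map_const_add {Ω : Type*} [MeasurableSpace Ω]
    {ν : Measure Ω} [IsProbabilityMeasure ν] {T : Ω → ℝ} (hT : MemLp T 2 ν) (a a' : ℝ)
    {S : Set ℝ} (hS : MeasurableSet S) {d : ℝ} (hd : d ≤ 1 / 16)
    (hPS : (ν.map fun w => a + T w).real Sᶜ ≤ d)
    (hQS : (ν.map fun w => a' + T w).real Sᶜ ≤ d) :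
    (1 / 2 - 2 * d) * |a - a'| - 17 / 8 * √(d * ∫ w, (T w - ν[T]) ^ 2 ∂ν) ≤
      |∫ ω, ω ∂hatMeasure (ν.map fun w => a + T w) (ν.map fun w => a' + T w) S -
        ∫ ω, ω ∂(ν.map fun w => a' + T w)| := by
  have := Measure.isProbabilityMeasure_map (μ := ν) (hT.aemeasurable.const_add a)
  have := Measure.isProbabilityMeasure_map (μ := ν) (hT.aemeasurable.const_add a')
  have key := le_abs_integral_hatMeasure_sub hS (memLp_id_map_const_add hT a)
    (memLp_id_map_const_add hT a')
    (by rw [variance_id_map_const_add hT.aemeasurable,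
      variance_id_map_const_add hT.aemeasurable])
    hd hPS hQS
  have hT1 := hT.integrable one_le_two
  simp only [id] at key
  rw [integral_id_map_const_add hT1, integral_id_map_const_add hT1, add_sub_add_right_eq_sub,
    variance_id_map_const_add hT.aemeasurable, variance_eq_integral hT.aemeasurable] at key
  rwa [integral_id_map_const_add hT1]

end HatMeasure

section Mechanism

variable {ι κ : Type*} [Fintype ι]

lemma Neighboring.symm {x x' : ι → ℝ} (h : Neighboring x x') : Neighboring x' x := by
  simpa only [Neighboring, abs_sub_comm] using h

variable {Ω β : Type*} [MeasurableSpace Ω] [MeasurableSpace β]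
  {M : (ι → ℝ) → Measure Ω} {ε δ : ℝ}

lemma IsDP.map (hM : IsDP M ε δ) {g : Ω → β} (hg : Measurable g) :
    IsDP (fun x => (M x).map g) ε δ := fun x x' h S hS => by
  simp only [Measure.map_apply hg hS]
  exact hM x x' h _ (hg hS)

lemma IsDP.measureReal_le (hM : IsDP M ε δ) (hδ : 0 ≤ δ) [∀ x, IsFiniteMeasure (M x)]
    {x x' : ι → ℝ} (h : Neighboring x x') {S : Set Ω} (hS : MeasurableSet S) :
    (M x).real S ≤ exp ε * (M x').real S + δ := by
  have hle := ENNReal.toReal_mono (by finiteness) (hM x x' h S hS)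
  rwa [ENNReal.toReal_add (by finiteness) ENNReal.ofReal_ne_top, ENNReal.toReal_mul,
    ENNReal.toReal_ofReal (exp_pos ε).le, ENNReal.toReal_ofReal hδ] at hle

lemma exists_neighboring_forall_abs_dotProduct_le (c x : ι → ℝ) :
    ∃ x', Neighboring x x' ∧ ∀ u : ι → ℝ, ∑ i, |u i| ≤ 1 → |c ⬝ᵥ u| ≤ |c ⬝ᵥ (x - x')| := by
  classical
  rcases isEmpty_or_nonempty ι with hι | hι
  · exact ⟨x, by simp [Neighboring], fun u _ => by simp [dotProduct]⟩
  obtain ⟨j, -, hj⟩ :=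
    Finset.exists_max_image Finset.univ (fun i => |c i|) Finset.univ_nonempty
  refine ⟨x - Pi.single j 1, by simp [Neighboring, Pi.single_apply, apply_ite (|·|)],
    fun u hu => ?_⟩
  rw [sub_sub_cancel, dotProduct_single, mul_one]
  calc |c ⬝ᵥ u| ≤ ∑ i, |c i * u i| := Finset.abs_sum_le_sum_abs _ _
    _ ≤ ∑ i, |c j| * |u i| := Finset.sum_le_sum fun i _ => by
        rw [abs_mul]; exact mul_le_mul_of_nonneg_right (hj i (Finset.mem_univ i)) (abs_nonneg _)
    _ = |c j| * ∑ i, |u i| := (Finset.mul_sum _ _ _).symm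
    _ ≤ |c j| := mul_le_of_le_one_right (abs_nonneg _) hu

variable [Fintype κ]

lemma width_le_two_mul {K : Set (κ → ℝ)} (hK : K.Nonempty) {θ : κ → ℝ} {r : ℝ}
    (h : ∀ v ∈ K, |θ ⬝ᵥ v| ≤ r) : width K θ ≤ 2 * r := by
  have hne : ((fun v => ∑ i, θ i * v i) '' K).Nonempty := hK.image _
  have hsup : sSup ((fun v => ∑ i, θ i * v i) '' K) ≤ r :=
    csSup_le hne (by rintro _ ⟨v, hv, rfl⟩; exact (abs_le.mp (h v hv)).2)
  have hinf : -r ≤ sInf ((fun v => ∑ i, θ i * v i) '' K) :=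
    le_csInf hne (by rintro _ ⟨v, hv, rfl⟩; exact (abs_le.mp (h v hv)).1)
  rw [width]
  linarith

lemma exists_neighboring_width_sensPolytope_le (A : Matrix κ ι ℝ) (θ : κ → ℝ) (x : ι → ℝ) :
    ∃ x', Neighboring x x' ∧
      width (sensPolytope A) θ ≤ 2 * |θ ⬝ᵥ (A *ᵥ x) - θ ⬝ᵥ (A *ᵥ x')| := by
  obtain ⟨x', hx', hmax⟩ := exists_neighboring_forall_abs_dotProduct_le (θ ᵥ* A) x
  refine ⟨x', hx', width_le_two_mul (K := sensPolytope A) ⟨0, 0, by simp, by simp⟩ ?_⟩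
  rintro _ ⟨u, hu, rfl⟩
  rw [dotProduct_mulVec, dotProduct_mulVec, dotProduct_mulVec, ← dotProduct_sub]
  exact hmax u hu

lemma IsDP.map_dotProduct {ν : Measure (κ → ℝ)} {A : Matrix κ ι ℝ}
    (hDP : IsDP (fun x => ν.map fun w => A *ᵥ x + w) ε δ) (θ : κ → ℝ) :
    IsDP (fun x => ν.map fun w => θ ⬝ᵥ (A *ᵥ x) + θ ⬝ᵥ w) ε δ := by
  have hθ : Measurable fun w : κ → ℝ => θ ⬝ᵥ w := by fun_prop
  convert hDP.map hθ using 2 with x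
  rw [Measure.map_map hθ (by fun_prop)]
  simp [Function.comp_def, dotProduct_add]

end Mechanism

end DPPaper

open DPPaper

theorem hatP_mean_separation_general (m n : ℕ) (p ε δ : ℝ) (hε : 0 < ε) (hδ0 : 0 ≤ δ)
    (A : Matrix (Fin m) (Fin n) ℝ)
    (ν : Measure (Fin m → ℝ)) (hν : IsProbabilityMeasure ν)
    (hmom : ∀ i, Integrable (fun w => (w i) ^ 2) ν)
    (hDP : IsDP (fun x => Measure.map (fun w => A.mulVec x + w) ν) ε δ)
    (hδ' : 2 * δ / (1 - Real.exp (-ε)) ≤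
      min (1 / 16) (min (ε * kappa A * (n : ℝ) ^ ((p - 2) / (2 * p)) / (12 * gammaP p A))
        (1 - Real.exp (-ε))))
    (θ : Fin m → ℝ) :
    ∀ x : Fin n → ℝ, ∃ x' : Fin n → ℝ, Neighboring x x' ∧
      (let P : Measure ℝ :=
        Measure.map (fun w => (∑ i, θ i * A.mulVec x i) + ∑ i, θ i * w i) ν
       let Q : Measure ℝ :=
        Measure.map (fun w => (∑ i, θ i * A.mulVec x' i) + ∑ i, θ i * w i) ν
       let S : Set ℝ := {ω | ENNReal.ofReal (Real.exp (-(2 * ε))) ≤ P.rnDeriv Q ω ∧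
                            P.rnDeriv Q ω ≤ ENNReal.ofReal (Real.exp (2 * ε))}
       let Phat : Measure ℝ := (Q S / P S) • P.restrict S + Q.restrict Sᶜ
       |(∫ ω, ω ∂Phat) - ∫ ω, ω ∂Q| ≥
         (1 / 2 - 2 * (2 * δ / (1 - Real.exp (-ε)))) * width (sensPolytope A) θ / 2
           - (17 / 8) * Real.sqrt ((2 * δ / (1 - Real.exp (-ε))) *
               (∫ w, ((∑ i, θ i * w i) - ∫ w', ∑ i, θ i * w' i ∂ν) ^ 2 ∂ν))) := by
  intro x
  obtain ⟨x', hxx', hwidth⟩ := exists_neighboring_width_sensPolytope_le A θ x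
  refine ⟨x', hxx', ?_⟩
  intro P Q S Phat
  have hθ : MemLp (fun w : Fin m → ℝ => ∑ i, θ i * w i) 2 ν :=
    memLp_finsetSum _ fun i _ =>
      ((memLp_two_iff_integrable_sq (measurable_pi_apply i).aestronglyMeasurable).mpr
        (hmom i)).const_mul (θ i)
  have hDPθ := hDP.map_dotProduct θ
  obtain ⟨hPS, hQS⟩ := measureReal_compl_privacyLossSet_le (P := P) (Q := Q) hε
    (fun U hU => hDPθ.measureReal_le hδ0 hxx' hU)
    (fun U hU => hDPθ.measureReal_le hδ0 hxx'.symm hU)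
  have hd := hδ'.trans (min_le_left _ _)
  refine le_trans ?_ (le_abs_integral_hatMeasure_map_const_add hθ _ _
    (measurableSet_privacyLossSet P Q (2 * ε)) hd hPS hQS)
  simp only [dotProduct] at hwidth
  rw [mul_div_assoc]
  exact sub_le_sub_right (mul_le_mul_of_nonneg_left (by linarith) (by linarith)) _

/-- the key lemma on the shifted distribution P̂. -/
theorem hatP_mean_separation (m n : ℕ) (p ε δ : ℝ) (hp : 2 ≤ p) (hε : 0 < ε) (hδ0 : 0 ≤ δ)
    (A : Matrix (Fin m) (Fin n) ℝ)
    (ν : Measure (Fin m → ℝ)) (hν : IsProbabilityMeasure ν)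
    (hmom : ∀ i, Integrable (fun w => (w i) ^ 2) ν)
    (hDP : IsDP (fun x => Measure.map (fun w => A.mulVec x + w) ν) ε δ)
    (hbias : Real.sqrt (∑ i, (∫ w, w i ∂ν) ^ 2)
        ≤ gammaP p A / ε * (n : ℝ) ^ ((p - 2) / (2 * p)))
    (hδ' : 2 * δ / (1 - Real.exp (-ε)) ≤
      min (1 / 16) (min (ε * kappa A * (n : ℝ) ^ ((p - 2) / (2 * p)) / (12 * gammaP p A))
        (1 - Real.exp (-ε))))
    (θ : Fin m → ℝ) :
    ∀ x : Fin n → ℝ, ∃ x' : Fin n → ℝ, Neighboring x x' ∧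
      (let P : Measure ℝ :=
        Measure.map (fun w => (∑ i, θ i * A.mulVec x i) + ∑ i, θ i * w i) ν
       let Q : Measure ℝ :=
        Measure.map (fun w => (∑ i, θ i * A.mulVec x' i) + ∑ i, θ i * w i) ν
       let S : Set ℝ := {ω | ENNReal.ofReal (Real.exp (-(2 * ε))) ≤ P.rnDeriv Q ω ∧
                            P.rnDeriv Q ω ≤ ENNReal.ofReal (Real.exp (2 * ε))}
       let Phat : Measure ℝ := (Q S / P S) • P.restrict S + Q.restrict Sᶜ
       |(∫ ω, ω ∂Phat) - ∫ ω, ω ∂Q| ≥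
         (1 / 2 - 2 * (2 * δ / (1 - Real.exp (-ε)))) * width (sensPolytope A) θ / 2
           - (17 / 8) * Real.sqrt ((2 * δ / (1 - Real.exp (-ε))) *
               (∫ w, ((∑ i, θ i * w i) - ∫ w', ∑ i, θ i * w' i ∂ν) ^ 2 ∂ν))) :=
  hatP_mean_separation_general m n p ε δ hε hδ0 A ν hν hmom hDP hδ' θ
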